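/- arXiv:1811.06206 — 3 statements merged into one kernel-verified Lean document; each statement's English description precedes it below -/
import Mathlib

section
/- Let M(s) = N(s)/D(s) with N(s) = −0.0426 s³ + 6.76 s² − 153.90 s + 33206.86 and D(s) = s⁴ + 86.15 s³ + 54490.53 s² + 24730.20 s + 1161.87 be the SNI UAV x-axis velocity transfer function, and let the NI controller be the constant gain k = −0.7 connected in positive feedback. Then the DC gain condition M(0)·k < 1 holds (indeed M(0)·k = (33206.86/1161.87)·(−0.7) < 0 < 1), and the resulting closed-loop system M/(1 − kM) is internally stable: every complex root of the closed-loop characteristic polynomial D(s) − k·N(s) = D(s) + 0.7·N(s) has strictly negative real part. -/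
/-- For the SNI UAV x-axis velocity transfer function `M(s) = N(s)/D(s)` with
`N(s) = -0.0426 s³ + 6.76 s² - 153.90 s + 33206.86`,
`D(s) = s⁴ + 86.15 s³ + 54490.53 s² + 24730.20 s + 1161.87`,
and the NI constant-gain controller `k = -0.7` in positive feedback, the DC gain
condition `M(0)·k < 1` holds (indeed `M(0)·k = (33206.86/1161.87)·(-0.7) < 0 < 1`),
and the closed loop is internally stable: every complex root of the closed-loop
characteristic polynomial `D(s) - k·N(s) = D(s) + 0.7·N(s)` has strictly negative
real part. -/
theorem uav_x_closed_loop_internally_stable :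
    let N : ℂ → ℂ := fun s => -0.0426 * s ^ 3 + 6.76 * s ^ 2 - 153.90 * s + 33206.86
    let D : ℂ → ℂ := fun s => s ^ 4 + 86.15 * s ^ 3 + 54490.53 * s ^ 2 + 24730.20 * s + 1161.87
    let k : ℝ := -0.7
    ((33206.86 / 1161.87 : ℝ) * k < 0 ∧ (0 : ℝ) < 1 ∧ (33206.86 / 1161.87 : ℝ) * k < 1) ∧
    N 0 / D 0 = ((33206.86 / 1161.87 : ℝ) : ℂ) ∧
    (∀ z : ℂ, D z - (k : ℂ) * N z = 0 → z.re < 0) := by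
  refine ⟨⟨by norm_num, by norm_num, by norm_num⟩, by norm_num, ?_⟩
  intro z h
  rw [show (((-0.7:ℝ)):ℂ) = -0.7 from by norm_num] at h
  have h' : 100000*z^4 + 8612018*z^3 + 5449526200*z^2 + 2462247000*z + 2440667200 = 0 := by
    linear_combination (100000:ℂ) * h
  have h1 := congrArg Complex.re h'
  have h2 := congrArg Complex.im h'
  simp only [Complex.add_re, Complex.add_im, Complex.mul_re, Complex.mul_im,
    Complex.re_ofNat, Complex.im_ofNat, Complex.zero_re, Complex.zero_im,
    pow_succ, pow_zero, Complex.one_re, Complex.one_im] at h1 h2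
  set x := z.re with hxdef
  set y := z.im with hydef
  by_contra hxneg
  push_neg at hxneg
  -- hxneg : 0 ≤ x
  rcases eq_or_ne y 0 with hy | hy
  · -- real root case: the polynomial is positive for x ≥ 0
    rw [hy] at h1
    nlinarith [pow_nonneg hxneg 4, pow_nonneg hxneg 3, pow_nonneg hxneg 2, hxneg,
      mul_nonneg (mul_nonneg hxneg hxneg) (mul_nonneg hxneg hxneg),
      mul_nonneg (mul_nonneg hxneg hxneg) hxneg, mul_nonneg hxneg hxneg]
  · -- complex root: imaginary part gives y² relation
    have hG : 4*x^3 + 3*(4306009/50000)*x^2 + 2*(27247631/500)*x + (2462247/100)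
        - y^2 * (4*x + (4306009/50000)) = 0 := by
      have hy2 : y * (4*x^3 + 3*(4306009/50000)*x^2 + 2*(27247631/500)*x + (2462247/100)
          - y^2 * (4*x + (4306009/50000))) = 0 := by
        linear_combination (1/100000 : ℝ) * h2
      rcases mul_eq_zero.mp hy2 with h | h
      · exact absurd h hy
      · exact h
    -- derive R(x) = 0
    have hR : (-64:ℝ)*x^6 + (-25836054/3125)*x^5 + (-328101450524243/156250000)*x^4
        + (-2426411671534798358729/15625000000000)*x^3
        + (-2362565546094086981111/156250000000)*x^2
        + (-63982049996544716466987/125000000000)*x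
        + (-35865456207627933924571/312500000000) = 0 := by
      linear_combination ((4*x + (4306009/50000))^2 / 100000) * h1
        + ((4*x + (4306009/50000)) * (y^2 - (6*x^2 + 3*(4306009/50000)*x + (27247631/500)))
           + (4*x^3 + 3*(4306009/50000)*x^2 + 2*(27247631/500)*x + (2462247/100))) * hG
    nlinarith [pow_nonneg hxneg 6, pow_nonneg hxneg 5, pow_nonneg hxneg 4,
      pow_nonneg hxneg 3, pow_nonneg hxneg 2, hxneg]
end

section
/- Let c₁, c₂ ∈ ℝ² be the centers of two obstacle circles with radii r₁, r₂ ≥ 0, let d₁₂ = ‖c₁ − c₂‖ > 0, and suppose the circles are not nested, i.e., d₁₂ + r₂ ≥ r₁ and d₁₂ + r₁ ≥ r₂. Define the grouped obstacle circle with center c = c₁ + ((d₁₂ + r₂ − r₁)/(2·d₁₂))·(c₂ − c₁) and radius R = (d₁₂ + r₁ + r₂)/2. Then the grouped circle contains both obstacle circles: the closed ball of center c₁ and radius r₁ and the closed ball of center c₂ and radius r₂ are both contained in the closed ball of center c and radius R. -/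
/-- Grouped obstacle circle: if `c₁, c₂` are centers of two obstacle circles of radii
`r₁, r₂ ≥ 0` at distance `d₁₂ = ‖c₁ - c₂‖ > 0`, the circles being non-nested
(`d₁₂ + r₂ ≥ r₁` and `d₁₂ + r₁ ≥ r₂`), then the circle with center
`c = c₁ + ((d₁₂ + r₂ - r₁)/(2 d₁₂)) • (c₂ - c₁)` and radius `R = (d₁₂ + r₁ + r₂)/2`
contains both obstacle circles. -/
theorem grouped_obstacle_circle_contains_both
    (c₁ c₂ : EuclideanSpace ℝ (Fin 2)) (r₁ r₂ : ℝ)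
    (hr₁ : 0 ≤ r₁) (hr₂ : 0 ≤ r₂)
    (d₁₂ : ℝ) (hd : d₁₂ = ‖c₁ - c₂‖) (hdpos : 0 < d₁₂)
    (h₁ : r₁ ≤ d₁₂ + r₂) (h₂ : r₂ ≤ d₁₂ + r₁) :
    Metric.closedBall c₁ r₁ ⊆
      Metric.closedBall (c₁ + ((d₁₂ + r₂ - r₁) / (2 * d₁₂)) • (c₂ - c₁))
        ((d₁₂ + r₁ + r₂) / 2) ∧
    Metric.closedBall c₂ r₂ ⊆
      Metric.closedBall (c₁ + ((d₁₂ + r₂ - r₁) / (2 * d₁₂)) • (c₂ - c₁))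
        ((d₁₂ + r₁ + r₂) / 2) := by
  set t : ℝ := (d₁₂ + r₂ - r₁) / (2 * d₁₂) with ht
  have ht0 : 0 ≤ t := div_nonneg (by linarith) (by linarith)
  have hdist1 : dist c₁ (c₁ + t • (c₂ - c₁)) = (d₁₂ + r₂ - r₁) / 2 := by
    rw [dist_eq_norm]
    have : c₁ - (c₁ + t • (c₂ - c₁)) = (-t) • (c₂ - c₁) := by
      simp [neg_smul]
    rw [this, norm_smul, norm_neg, ← neg_sub c₁ c₂, norm_neg, ← hd]
    rw [Real.norm_eq_abs, abs_of_nonneg ht0, ht]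
    field_simp
  have hdist2 : dist c₂ (c₁ + t • (c₂ - c₁)) = (d₁₂ + r₁ - r₂) / 2 := by
    rw [dist_eq_norm]
    have : c₂ - (c₁ + t • (c₂ - c₁)) = (1 - t) • (c₂ - c₁) := by
      rw [sub_smul, one_smul]; abel
    have h1t : 0 ≤ 1 - t := by
      rw [ht, sub_nonneg, div_le_one (by linarith)]; linarith
    rw [this, norm_smul, ← neg_sub c₁ c₂, norm_neg, ← hd]
    rw [Real.norm_eq_abs, abs_of_nonneg h1t, ht]
    field_simp
    ring
  constructor
  · exact Metric.closedBall_subset_closedBall' (by rw [hdist1]; linarith)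
  · exact Metric.closedBall_subset_closedBall' (by rw [hdist2]; linarith)
end

section
/- Let c₁, c₂ ∈ ℝ² be the centers of two obstacle circles with radii r₁, r₂ ≥ 0, and let d > 0 be the diameter of the robot's circumscribed circle. If the grouping condition ‖c₁ − c₂‖ < d + r₁ + r₂ holds, then the robot cannot pass between the obstacles: for every point p on the segment joining c₁ and c₂, the closed ball of center p and radius d/2 intersects the closed ball of center c₁ and radius r₁ or the closed ball of center c₂ and radius r₂. -/
/-- Grouping condition: if the distance between the two obstacle centers satisfies
`‖c₁ - c₂‖ < d + r₁ + r₂`, where `d > 0` is the diameter of the robot's circumscribed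
circle, then the robot cannot pass between the obstacles: for every point `p` on the
segment joining the centers, the closed ball of center `p` and radius `d/2` meets the
closed ball around `c₁` of radius `r₁` or the closed ball around `c₂` of radius `r₂`. -/
theorem grouped_obstacles_robot_blocked
    (c₁ c₂ : EuclideanSpace ℝ (Fin 2)) (r₁ r₂ d : ℝ)
    (hr₁ : 0 ≤ r₁) (hr₂ : 0 ≤ r₂) (hd : 0 < d)
    (hgroup : ‖c₁ - c₂‖ < d + r₁ + r₂) :
    ∀ p ∈ segment ℝ c₁ c₂,
      (Metric.closedBall p (d / 2) ∩ Metric.closedBall c₁ r₁).Nonempty ∨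
      (Metric.closedBall p (d / 2) ∩ Metric.closedBall c₂ r₂).Nonempty := by
  intro p hp
  simp only [← Set.not_disjoint_iff_nonempty_inter,
    disjoint_closedBall_closedBall_iff (half_pos hd).le hr₁,
    disjoint_closedBall_closedBall_iff (half_pos hd).le hr₂, not_lt]
  by_contra! hfar
  have hsplit : dist c₁ p + dist p c₂ = dist c₁ c₂ := dist_add_dist_of_mem_segment hp
  rw [dist_comm c₁ p, dist_eq_norm c₁ c₂] at hsplit
  linarith [hfar.1, hfar.2]
end
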